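/- arXiv:1001.4747 — 2 statements merged into one kernel-verified Lean document; each statement's English description precedes it below -/
import Mathlib

section
/- For p > 1, the L² norm squared of the soliton Q_p equals ((p+1)/2)^{2/(p-1)} · Γ((p+1)/(p-1)) √π / Γ((p+3)/(2(p-1))), i.e., ∫_ℝ Q_p(x)² dx = ((p+1)/2)^{2/(p-1)} Γ((p+1)/(p-1)) √π / Γ((p+3)/(2(p-1))). -/
/-!
Since `sech (x / 2) ^ 2 = 4 σ(x) (1 - σ(x))` for the logistic sigmoid `σ`, and `σ' = σ (1 - σ)`,
the substitution `t = σ(x)` turns `∫ sech ^ s` into the symmetric Beta integral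
`2 ^ (s - 1) B(s / 2, s / 2)`, which Legendre's duplication formula rewrites as
`√π Γ(s / 2) / Γ(s / 2 + 1 / 2)`. Finally `Q_p ^ 2` is `((p + 1) / 2) ^ (2 / (p - 1))` times
`sech ^ s` of `(p - 1) x / 2` with `s = 4 / (p - 1)`, and the Jacobian `2 / (p - 1) = s / 2` is
absorbed by `Γ(s / 2 + 1) = (s / 2) Γ(s / 2)`.
-/

open MeasureTheory

noncomputable def sech (x : ℝ) : ℝ := 2 / (Real.exp x + Real.exp (-x))

noncomputable def Qp (p : ℝ) (x : ℝ) : ℝ :=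
  ((p + 1) / 2) ^ (1 / (p - 1)) * sech ((p - 1) * x / 2) ^ (2 / (p - 1))

open Real Set ProbabilityTheory

lemma sech_pos (x : ℝ) : 0 < sech x := by
  unfold sech; positivity

lemma sech_half_sq (x : ℝ) : sech (x / 2) ^ 2 = 4 * (sigmoid x * (1 - sigmoid x)) := by
  rw [← sigmoid_neg, sigmoid_def, sigmoid_def, sech, neg_neg]
  have h : exp x = exp (x / 2) ^ 2 := by rw [← exp_nat_mul]; ring_nf
  have h' : exp (-x) = exp (-(x / 2)) ^ 2 := by rw [← exp_nat_mul]; ring_nf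
  have hinv : exp (x / 2) * exp (-(x / 2)) = 1 := by rw [← exp_add]; simp
  rw [h, h']
  field_simp
  linear_combination 4 * (exp (x / 2) * exp (-(x / 2)) - 1) * hinv

lemma integral_Ioo_rpow_mul_one_sub_rpow {a b : ℝ} (ha : 0 < a) (hb : 0 < b) :
    ∫ t in Ioo 0 1, t ^ (a - 1) * (1 - t) ^ (b - 1) = beta a b := by
  rw [beta_eq_betaIntegralReal a b ha hb, Complex.betaIntegral,
    intervalIntegral.integral_of_le zero_le_one, ← integral_Ioc_eq_integral_Ioo,
    ← RCLike.re_to_complex, ← integral_re]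
  · refine setIntegral_congr_fun measurableSet_Ioc fun t ⟨ht₀, ht₁⟩ ↦ ?_
    norm_cast
    rw [← Complex.ofReal_cpow ht₀.le, ← Complex.ofReal_cpow (by linarith), RCLike.re_to_complex,
      Complex.re_mul_ofReal, Complex.ofReal_re]
  · exact (intervalIntegrable_iff_integrableOn_Ioc_of_le zero_le_one).mp
      (Complex.betaIntegral_convergent (by simpa) (by simpa))

lemma integral_sigmoid_rpow_mul_one_sub_rpow {a b : ℝ} (ha : 0 < a) (hb : 0 < b) :
    ∫ x, sigmoid x ^ a * (1 - sigmoid x) ^ b = beta a b := by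
  have key := integral_image_eq_integral_abs_deriv_smul MeasurableSet.univ
    (fun x _ ↦ (hasDerivAt_sigmoid x).hasDerivWithinAt) sigmoid_injective.injOn
    (fun t ↦ t ^ (a - 1) * (1 - t) ^ (b - 1))
  rw [image_univ, range_sigmoid, setIntegral_univ, integral_Ioo_rpow_mul_one_sub_rpow ha hb] at key
  rw [key]
  congr 1 with x
  have h₀ := sigmoid_pos x
  have h₁ : 0 < 1 - sigmoid x := sub_pos.mpr (sigmoid_lt_one x)
  rw [abs_of_pos (mul_pos h₀ h₁), smul_eq_mul, rpow_sub_one h₀.ne', rpow_sub_one h₁.ne']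
  field_simp

lemma sech_half_rpow (x s : ℝ) :
    sech (x / 2) ^ s = 2 ^ s * (sigmoid x ^ (s / 2) * (1 - sigmoid x) ^ (s / 2)) := by
  have h₀ := (sigmoid_pos x).le
  have h₁ : 0 ≤ 1 - sigmoid x := sub_nonneg.mpr (sigmoid_le_one x)
  calc sech (x / 2) ^ s = (sech (x / 2) ^ 2) ^ (s / 2) := by
        rw [← rpow_two, ← rpow_mul (sech_pos _).le, mul_div_cancel₀ s two_ne_zero]
    _ = (2 ^ 2) ^ (s / 2) * (sigmoid x * (1 - sigmoid x)) ^ (s / 2) := by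
        rw [sech_half_sq, mul_rpow (by norm_num) (mul_nonneg h₀ h₁)]; norm_num
    _ = 2 ^ s * (sigmoid x ^ (s / 2) * (1 - sigmoid x) ^ (s / 2)) := by
        rw [← rpow_two, ← rpow_mul zero_le_two, mul_div_cancel₀ s two_ne_zero, mul_rpow h₀ h₁]

lemma integral_sech_rpow_eq_beta {s : ℝ} (hs : 0 < s) :
    ∫ x, sech x ^ s = 2 ^ (s - 1) * beta (s / 2) (s / 2) := by
  have hhalf : ∫ x, sech (x / 2) ^ s = 2 ^ s * beta (s / 2) (s / 2) := by
    simp_rw [sech_half_rpow]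
    rw [integral_const_mul, integral_sigmoid_rpow_mul_one_sub_rpow (half_pos hs) (half_pos hs)]
  have hscale := Measure.integral_comp_mul_left (fun y ↦ sech (y / 2) ^ s) 2
  simp only [mul_div_cancel_left₀ _ (two_ne_zero' ℝ)] at hscale
  rw [hscale, hhalf, abs_of_pos (by norm_num), smul_eq_mul, rpow_sub_one two_ne_zero]
  ring

lemma two_rpow_mul_beta_half_half {s : ℝ} (hs : 0 < s) :
    2 ^ (s - 1) * beta (s / 2) (s / 2) = √π * Gamma (s / 2) / Gamma (s / 2 + 1 / 2) := by
  have hdup := Gamma_mul_Gamma_add_half (s / 2)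
  rw [mul_div_cancel₀ s two_ne_zero] at hdup
  have hΓs := (Gamma_pos_of_pos hs).ne'
  have hΓ := (Gamma_pos_of_pos (by positivity : 0 < s / 2 + 1 / 2)).ne'
  have h2 : (2 : ℝ) ^ (s - 1) * 2 ^ (1 - s) = 1 := by
    rw [← rpow_add two_pos]; simp
  rw [beta, add_halves, eq_div_iff hΓ, mul_div_assoc', div_mul_eq_mul_div, div_eq_iff hΓs]
  linear_combination 2 ^ (s - 1) * Gamma (s / 2) * hdup + Gamma (s / 2) * Gamma s * √π * h2

lemma integral_sech_rpow {s : ℝ} (hs : 0 < s) :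
    ∫ x, sech x ^ s = √π * Gamma (s / 2) / Gamma (s / 2 + 1 / 2) := by
  rw [integral_sech_rpow_eq_beta hs, two_rpow_mul_beta_half_half hs]

lemma Qp_sq {p : ℝ} (hp : -1 ≤ p) (x : ℝ) :
    Qp p x ^ 2 = ((p + 1) / 2) ^ (2 / (p - 1)) * sech ((p - 1) / 2 * x) ^ (4 / (p - 1)) := by
  have hC : 0 ≤ (p + 1) / 2 := by linarith
  rw [Qp, mul_pow, ← rpow_mul_natCast hC, ← rpow_mul_natCast (sech_pos _).le]
  ring_nf

/-- The squared `L²` norm of the soliton `Q_p`. -/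
theorem soliton_L2_norm (p : ℝ) (hp : 1 < p) :
    ∫ x : ℝ, (Qp p x) ^ 2 =
      ((p + 1) / 2) ^ (2 / (p - 1)) * Real.Gamma ((p + 1) / (p - 1)) * Real.sqrt Real.pi /
        Real.Gamma ((p + 3) / (2 * (p - 1))) := by
  have hp₁ : 0 < p - 1 := by linarith
  have hΓ : Gamma ((p + 1) / (p - 1)) = 2 / (p - 1) * Gamma (2 / (p - 1)) := by
    rw [show (p + 1) / (p - 1) = 2 / (p - 1) + 1 by field_simp; ring,
      Gamma_add_one (by positivity)]
  have hhalf : (p + 3) / (2 * (p - 1)) = 4 / (p - 1) / 2 + 1 / 2 := by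
    field_simp; ring
  simp_rw [Qp_sq (by linarith : -1 ≤ p)]
  rw [integral_const_mul, Measure.integral_comp_mul_left (fun y ↦ sech y ^ (4 / (p - 1))),
    integral_sech_rpow (by positivity), abs_of_pos (by positivity), smul_eq_mul, hΓ, hhalf,
    show 4 / (p - 1) / 2 = 2 / (p - 1) by ring, inv_div]
  ring
end

section
/- Let Q(x) = (5/2)^{1/3} sech^{2/3}(3x/2) and L u = -u'' + u - 4Q³u. Then L(Q^{5/2}) = -(21/4) Q^{5/2}; that is, Q^{5/2} is an eigenfunction of L with eigenvalue -21/4. -/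
/-! Writing `Q^{5/2} = (5/2)^{5/6} cosh^{-5/3}(3x/2)` and `Q³ = (5/2) cosh^{-2}(3x/2)`, the claim
reduces to the identity `(cosh^p(a x))'' = a²p² cosh^p(a x) - a²p(p-1) cosh^{p-2}(a x)`
(from `sinh² = cosh² - 1`): for `a = 3/2`, `p = -5/3` the `cosh^{p-2}` term is exactly
cancelled by the potential `4Q³`, and `1 - a²p² = -21/4`. -/

open Real

/-- The quartic KdV soliton `Q(x) = (5/2)^{1/3} sech^{2/3}(3x/2)`. -/
noncomputable def Q (x : ℝ) : ℝ := ((5 : ℝ) / 2) ^ ((1 : ℝ) / 3) * sech (3 * x / 2) ^ ((2 : ℝ) / 3)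

/-- The linearized operator `L u = -u'' + u - 4Q³u`. -/
noncomputable def Lop (u : ℝ → ℝ) (x : ℝ) : ℝ :=
  -(deriv (deriv u) x) + u x - 4 * Q x ^ 3 * u x

lemma sech_eq_inv_cosh (t : ℝ) : sech t = (cosh t)⁻¹ := by
  rw [sech, cosh_eq, inv_div]

lemma Q_rpow (r y : ℝ) :
    Q y ^ r = (5 / 2 : ℝ) ^ (r / 3) * cosh (3 / 2 * y) ^ (-(2 * r / 3)) := by
  have hc : 0 < cosh (3 / 2 * y) := cosh_pos _
  rw [Q, sech_eq_inv_cosh, show 3 * y / 2 = 3 / 2 * y by ring, inv_rpow hc.le,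
    ← rpow_neg hc.le, mul_rpow (by positivity) (by positivity), ← rpow_mul (by norm_num),
    ← rpow_mul hc.le]
  ring_nf

lemma Q_pow_three (y : ℝ) : Q y ^ 3 = 5 / 2 * cosh (3 / 2 * y) ^ (-2 : ℝ) := by
  rw [← rpow_natCast, Q_rpow]
  norm_num

section CoshRpow

variable (a p : ℝ)

lemma hasDerivAt_cosh_mul_rpow (x : ℝ) :
    HasDerivAt (fun y => cosh (a * y) ^ p) (a * p * sinh (a * x) * cosh (a * x) ^ (p - 1)) x := by
  convert ((hasDerivAt_const_mul (x := x) a).cosh.rpow_const (p := p) (Or.inl (cosh_pos _).ne'))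
    using 1
  ring

lemma deriv_cosh_mul_rpow :
    deriv (fun y => cosh (a * y) ^ p) = fun x => a * p * sinh (a * x) * cosh (a * x) ^ (p - 1) :=
  funext fun x => (hasDerivAt_cosh_mul_rpow a p x).deriv

lemma deriv_deriv_cosh_mul_rpow (x : ℝ) :
    deriv (deriv fun y => cosh (a * y) ^ p) x
      = a ^ 2 * p ^ 2 * cosh (a * x) ^ p - a ^ 2 * p * (p - 1) * cosh (a * x) ^ (p - 2) := by
  have hc : 0 < cosh (a * x) := cosh_pos _
  have hderiv : HasDerivAt (fun y => a * p * sinh (a * y) * cosh (a * y) ^ (p - 1))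
      (a * p * (cosh (a * x) * a) * cosh (a * x) ^ (p - 1)
        + a * p * sinh (a * x) * (a * (p - 1) * sinh (a * x) * cosh (a * x) ^ (p - 1 - 1))) x :=
    ((hasDerivAt_const_mul (x := x) a).sinh.const_mul (a * p)).mul
      (hasDerivAt_cosh_mul_rpow a (p - 1) x)
  rw [deriv_cosh_mul_rpow, hderiv.deriv]
  have hcosh_mul : cosh (a * x) * cosh (a * x) ^ (p - 1) = cosh (a * x) ^ p := by
    rw [mul_comm, ← rpow_add_one hc.ne', sub_add_cancel]
  have hsq_mul : cosh (a * x) ^ 2 * cosh (a * x) ^ (p - 1 - 1) = cosh (a * x) ^ p := by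
    rw [← rpow_natCast, ← rpow_add hc]
    ring_nf
  rw [show p - 2 = p - 1 - 1 by ring]
  linear_combination (a ^ 2 * p) * hcosh_mul + (a ^ 2 * p * (p - 1)) * hsq_mul
    + (a ^ 2 * p * (p - 1) * cosh (a * x) ^ (p - 1 - 1)) * sinh_sq (a * x)

end CoshRpow

/-- `Q^{5/2}` is an eigenfunction of `L` with eigenvalue `-21/4`. -/
theorem Lop_groundstate (x : ℝ) :
    Lop (fun y => Q y ^ ((5 : ℝ) / 2)) x = -(21 / 4) * Q x ^ ((5 : ℝ) / 2) := by
  have hQ : (fun y => Q y ^ ((5 : ℝ) / 2))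
      = fun y => (5 / 2 : ℝ) ^ ((5 : ℝ) / 6) * cosh (3 / 2 * y) ^ (-(5 : ℝ) / 3) := by
    funext y
    rw [Q_rpow]
    norm_num
  have hpotential : cosh (3 / 2 * x) ^ (-2 : ℝ) * cosh (3 / 2 * x) ^ (-(5 : ℝ) / 3)
      = cosh (3 / 2 * x) ^ (-(5 : ℝ) / 3 - 2) := by
    rw [← rpow_add (cosh_pos _)]
    norm_num
  rw [Lop, hQ, deriv_const_mul_field', deriv_const_mul_field']
  beta_reduce
  rw [deriv_deriv_cosh_mul_rpow, Q_pow_three, congrFun hQ x]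
  linear_combination (-10 * (5 / 2 : ℝ) ^ ((5 : ℝ) / 6)) * hpotential
end
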